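/- (Theorem 5, first bound) In the non-oblivious model, assume b_k > 0 for k ∈ {1,2} and r₂ > 0. Then for every m, k ∈ {1,2} and t ∈ ℕ, E[h_{mk}(t)] ≤ ∑_{j=0}^{t} (1 − b_k r₂)^j; consequently, limsup_{T→∞} (1/T) ∑_{t=1}^{T} (1/4) ∑_{m∈{1,2}} ∑_{k∈{1,2}} E[h_{mk}(t)] ≤ (1/2) ∑_{k∈{1,2}} 1/(b_k r₂). -/

import Mathlib

/-- Index type for the primitive random variables of the non-oblivious model:
`inl (m, k, t)` indexes the request variable of user `m`, CP `k`, time `t`;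
`inr (n, k, t)` indexes the uniform variable of eRRH `n`, CP `k`, time `t`. -/
abbrev NFranIdx : Type := (Fin 2 × Fin 2 × ℕ) ⊕ (Fin 2 × Fin 2 × ℕ)

/-- Codomain of each primitive random variable. -/
def NFranType : NFranIdx → Type
  | .inl _ => Fin 3
  | .inr _ => ℝ

instance NFranType.instMeasurableSpace : ∀ i, MeasurableSpace (NFranType i)
  | .inl _ => inferInstanceAs (MeasurableSpace (Fin 3))
  | .inr _ => inferInstanceAs (MeasurableSpace ℝ)

/-- State-dependent command rate for CP 1 (index `0`), as a function of the
two current ages `g1, g2` at the eRRH and the threshold `z`. -/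
noncomputable def nrate1 (r1 r2 : ℝ) (z g1 g2 : ℕ) : ℝ :=
  if z ≤ g1 ∧ z ≤ g2 then (r1 + r2) / 2 else if g2 ≤ g1 then r1 else r2

/-- State-dependent command rate for CP 2 (index `1`). -/
noncomputable def nrate2 (r1 r2 : ℝ) (z g1 g2 : ℕ) : ℝ :=
  if z ≤ g1 ∧ z ≤ g2 then (r1 + r2) / 2 else if g1 < g2 then r1 else r2

/-- Non-oblivious 2-user/2-eRRH/2-CP F-RAN model with threshold `z`. -/
structure NonObliviousFRAN where
  /-- sample space -/
  Ω : Type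
  [mΩ : MeasurableSpace Ω]
  μ : MeasureTheory.Measure Ω
  isProb : MeasureTheory.IsProbabilityMeasure μ
  /-- threshold -/
  z : ℕ
  z_pos : 1 ≤ z
  /-- request rates: `bsplit k n = b_k^{(n+1)}` -/
  bsplit : Fin 2 → Fin 2 → ℝ
  bsplit_nonneg : ∀ k n, 0 ≤ bsplit k n
  bsum_le_one : ∀ k, bsplit k 0 + bsplit k 1 ≤ 1
  /-- command rates `0 ≤ r2 ≤ r1 ≤ 1` -/
  r1 : ℝ
  r2 : ℝ
  r2_nonneg : 0 ≤ r2
  r2_le_r1 : r2 ≤ r1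
  r1_le_one : r1 ≤ 1
  /-- request variables: value `0` = no request, value `n.succ` = request sent to eRRH `n` -/
  R : Fin 2 → Fin 2 → ℕ → Ω → Fin 3
  /-- i.i.d. uniform-[0,1] variables driving the command decisions -/
  U : Fin 2 → Fin 2 → ℕ → Ω → ℝ
  R_meas : ∀ m k t, Measurable (R m k t)
  U_meas : ∀ n k t, Measurable (U n k t)
  R_law : ∀ m k t (n : Fin 2), μ {ω | R m k t ω = n.succ} = ENNReal.ofReal (bsplit k n)
  R_law0 : ∀ m k t, μ {ω | R m k t ω = 0} = ENNReal.ofReal (1 - (bsplit k 0 + bsplit k 1))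
  U_law : ∀ n k t, μ.map (U n k t) = MeasureTheory.volume.restrict (Set.Icc (0 : ℝ) 1)
  /-- all the primitive random variables are mutually independent -/
  indep : ProbabilityTheory.iIndepFun (m := fun i => NFranType.instMeasurableSpace i)
      (fun i => Sum.rec (motive := fun j => Ω → NFranType j)
        (fun p => R p.1 p.2.1 p.2.2) (fun p => U p.1 p.2.1 p.2.2) i) μ

attribute [instance] NonObliviousFRAN.mΩ

open MeasureTheory ProbabilityTheory Filter
open scoped Classical

namespace NonObliviousFRAN

variable (M : NonObliviousFRAN)

/-- The pair of AoI processes `(g_{n1}(t), g_{n2}(t))` at eRRH `n`. -/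
noncomputable def gpair (n : Fin 2) : ℕ → M.Ω → ℕ × ℕ
  | 0 => fun _ => (1, 1)
  | t + 1 => fun ω =>
      ((if (M.U n 0 t ω ≤ nrate1 M.r1 M.r2 M.z (gpair n t ω).1 (gpair n t ω).2)
            ∧ ∃ m : Fin 2, M.R m 0 t ω = n.succ then 1 else (gpair n t ω).1 + 1),
       (if (M.U n 1 t ω ≤ nrate2 M.r1 M.r2 M.z (gpair n t ω).1 (gpair n t ω).2)
            ∧ ∃ m : Fin 2, M.R m 1 t ω = n.succ then 1 else (gpair n t ω).2 + 1))

/-- AoI of CP `k` at eRRH `n`. -/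
noncomputable def g (n k : Fin 2) (t : ℕ) (ω : M.Ω) : ℕ :=
  if k = 0 then (M.gpair n t ω).1 else (M.gpair n t ω).2

/-- The state-dependent command rate `r_{nk}(t)` as a random variable. -/
noncomputable def nrate (n k : Fin 2) (t : ℕ) (ω : M.Ω) : ℝ :=
  if k = 0 then nrate1 M.r1 M.r2 M.z (M.gpair n t ω).1 (M.gpair n t ω).2
  else nrate2 M.r1 M.r2 M.z (M.gpair n t ω).1 (M.gpair n t ω).2

/-- Command indicator: `γ_{nk}(t) = 1` iff `U_{nk}(t) ≤ r_{nk}(t)`. -/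
def cmd (n k : Fin 2) (t : ℕ) (ω : M.Ω) : Prop :=
  M.U n k t ω ≤ M.nrate n k t ω

/-- AoI of CP `k` at user `m`. -/
noncomputable def h (m k : Fin 2) : ℕ → M.Ω → ℕ
  | 0 => fun _ => 1
  | t + 1 => fun ω =>
      if M.R m k t ω = 0 then h m k t ω + 1
      else if M.R m k t ω = 1 then
        (if M.cmd 0 k t ω then 1 else min (h m k t ω) (M.g 0 k t ω) + 1)
      else
        (if M.cmd 1 k t ω then 1 else min (h m k t ω) (M.g 1 k t ω) + 1)

/-- Expected AoI of CP `k` at user `m` at time `t`. -/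
noncomputable def Eh (m k : Fin 2) (t : ℕ) : ℝ := ∫ ω, (M.h m k t ω : ℝ) ∂M.μ

/-- Total request rate of a user for CP `k`: `b_k = b_k^{(1)} + b_k^{(2)}`. -/
def bk (k : Fin 2) : ℝ := M.bsplit k 0 + M.bsplit k 1

end NonObliviousFRAN

/-!
Let `B` be the event that at time `t` user `m` asks some eRRH `n` for CP `k` and
`U_{nk}(t) ≤ r₂`. Every command rate is at least `r₂`, so on `B` the eRRH fetches a fresh copy
and `h_{mk}(t+1) = 1`, while always `h_{mk}(t+1) ≤ h_{mk}(t) + 1`. The event `B` is built from the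
time-`t` variables alone and has probability `b_k r₂`, whereas `h_{mk}(t)` is a function of the
earlier ones, so `E h_{mk}(t+1) ≤ 1 + (1 - b_k r₂) E h_{mk}(t)`. Iterating gives the geometric
bound, which is at most `1 / (b_k r₂)`; hence so are the Cesàro averages.
-/

theorem le_geom_sum_of_le_one_add_mul {α : Type*} [Semiring α] [PartialOrder α]
    [IsOrderedRing α] {x : ℕ → α} {q : α} (hq : 0 ≤ q) (h0 : x 0 ≤ 1)
    (hstep : ∀ t, x (t + 1) ≤ 1 + q * x t) : ∀ t, x t ≤ ∑ j ∈ Finset.range (t + 1), q ^ j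
  | 0 => by simpa using h0
  | t + 1 => by
    calc x (t + 1) ≤ 1 + q * x t := hstep t
      _ ≤ 1 + q * ∑ j ∈ Finset.range (t + 1), q ^ j := by
        gcongr
        exact le_geom_sum_of_le_one_add_mul hq h0 hstep t
      _ = ∑ j ∈ Finset.range (t + 1 + 1), q ^ j := (add_comm _ _).trans geom_sum_succ.symm

theorem limsup_cesaro_le {f : ℕ → ℝ} {C : ℝ} (hf0 : ∀ t, 0 ≤ f t) (hfC : ∀ t, f t ≤ C) :
    limsup (fun T : ℕ => (1 / (T : ℝ)) * ∑ t ∈ Finset.Icc 1 T, f t) atTop ≤ C := by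
  refine limsup_le_of_le (isCoboundedUnder_le_of_le atTop (x := 0) fun T => ?_)
    (eventually_atTop.2 ⟨1, fun T hT => ?_⟩)
  · exact mul_nonneg (by positivity) (Finset.sum_nonneg fun t _ => hf0 t)
  · have hT : (0 : ℝ) < T := by exact_mod_cast hT
    calc (1 / (T : ℝ)) * ∑ t ∈ Finset.Icc 1 T, f t ≤ 1 / T * (T * C) := by
          gcongr
          exact (Finset.sum_le_card_nsmul _ _ C fun t _ => hfC t).trans_eq (by simp)
      _ = C := by field_simp

namespace NonObliviousFRAN

variable (M : NonObliviousFRAN)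

noncomputable def prim : ∀ i : NFranIdx, M.Ω → NFranType i :=
  fun i => Sum.rec (motive := fun j => M.Ω → NFranType j)
    (fun p => M.R p.1 p.2.1 p.2.2) (fun p => M.U p.1 p.2.1 p.2.2) i

def primTime : NFranIdx → ℕ := Sum.elim (fun p => p.2.2) (fun p => p.2.2)

theorem measurable_prim : ∀ i, Measurable (M.prim i)
  | .inl p => M.R_meas p.1 p.2.1 p.2.2
  | .inr p => M.U_meas p.1 p.2.1 p.2.2

noncomputable abbrev sigmaOf (S : Set NFranIdx) : MeasurableSpace M.Ω :=
  ⨆ i ∈ S, (NFranType.instMeasurableSpace i).comap (M.prim i)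

noncomputable abbrev past (t : ℕ) : MeasurableSpace M.Ω := M.sigmaOf {i | primTime i < t}

noncomputable abbrev present (t : ℕ) : MeasurableSpace M.Ω := M.sigmaOf {i | primTime i = t}

theorem sigmaOf_le (S : Set NFranIdx) : M.sigmaOf S ≤ M.mΩ :=
  iSup₂_le fun i _ => (M.measurable_prim i).comap_le

theorem measurable_prim_of_mem {S : Set NFranIdx} {i : NFranIdx} (hi : i ∈ S) :
    Measurable[M.sigmaOf S] (M.prim i) :=
  measurable_iff_comap_le.2 <|
    le_iSup₂ (f := fun i (_ : i ∈ S) => (NFranType.instMeasurableSpace i).comap (M.prim i)) i hi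

theorem past_mono {s t : ℕ} (hst : s ≤ t) : M.past s ≤ M.past t :=
  biSup_mono fun _ hi => lt_of_lt_of_le hi hst

theorem indep_past_present (t : ℕ) : Indep (M.past t) (M.present t) M.μ :=
  indep_iSup_of_disjoint (fun i => (M.measurable_prim i).comap_le)
    ((iIndepFun_iff_iIndep _ _ _).mp M.indep)
    (Set.disjoint_left.2 fun _ hi hi' => (ne_of_lt hi) hi')

variable {M}

theorem measurable_R_past {m k : Fin 2} {s t : ℕ} (hs : s < t) :
    Measurable[M.past t] (M.R m k s) :=
  M.measurable_prim_of_mem (i := .inl (m, k, s)) hs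

theorem measurable_U_past {n k : Fin 2} {s t : ℕ} (hs : s < t) :
    Measurable[M.past t] (M.U n k s) :=
  M.measurable_prim_of_mem (i := .inr (n, k, s)) hs

theorem measurable_R_present {m k : Fin 2} {t : ℕ} : Measurable[M.present t] (M.R m k t) :=
  M.measurable_prim_of_mem (i := .inl (m, k, t)) rfl

theorem measurable_U_present {n k : Fin 2} {t : ℕ} : Measurable[M.present t] (M.U n k t) :=
  M.measurable_prim_of_mem (i := .inr (n, k, t)) rfl

variable (M)

theorem measurable_gpair (n : Fin 2) : ∀ t, Measurable[M.past t] (M.gpair n t)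
  | 0 => measurable_const
  | t + 1 => by
    have ih := (measurable_gpair n t).mono (M.past_mono t.le_succ) le_rfl
    have hreq (k : Fin 2) :
        MeasurableSet[M.past (t + 1)] {ω | ∃ m : Fin 2, M.R m k t ω = n.succ} := by
      rw [Set.ofPred_exists]
      exact .iUnion fun m => measurable_R_past t.lt_succ_self (measurableSet_singleton _)
    have hfetch (k : Fin 2) (rate : ℕ × ℕ → ℝ) : MeasurableSet[M.past (t + 1)]
        {ω | M.U n k t ω ≤ rate (M.gpair n t ω) ∧ ∃ m : Fin 2, M.R m k t ω = n.succ} :=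
      (measurableSet_le (measurable_U_past t.lt_succ_self)
        ((measurable_of_countable rate).comp ih)).inter (hreq k)
    exact .prodMk
      (.ite (hfetch 0 fun p => nrate1 M.r1 M.r2 M.z p.1 p.2) measurable_const
        ((measurable_of_countable fun p : ℕ × ℕ => p.1 + 1).comp ih))
      (.ite (hfetch 1 fun p => nrate2 M.r1 M.r2 M.z p.1 p.2) measurable_const
        ((measurable_of_countable fun p : ℕ × ℕ => p.2 + 1).comp ih))

theorem measurable_g (n k : Fin 2) (t : ℕ) : Measurable[M.past t] (M.g n k t) :=
  (measurable_of_countable fun p : ℕ × ℕ => if k = 0 then p.1 else p.2).comp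
    (M.measurable_gpair n t)

theorem measurable_nrate (n k : Fin 2) (t : ℕ) : Measurable[M.past t] (M.nrate n k t) :=
  (measurable_of_countable fun p : ℕ × ℕ =>
    if k = 0 then nrate1 M.r1 M.r2 M.z p.1 p.2 else nrate2 M.r1 M.r2 M.z p.1 p.2).comp
    (M.measurable_gpair n t)

theorem measurableSet_cmd (n k : Fin 2) (t : ℕ) :
    MeasurableSet[M.past (t + 1)] {ω | M.cmd n k t ω} :=
  measurableSet_le (measurable_U_past t.lt_succ_self)
    ((M.measurable_nrate n k t).mono (M.past_mono t.le_succ) le_rfl)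

theorem measurable_h (m k : Fin 2) : ∀ t, Measurable[M.past t] (M.h m k t)
  | 0 => measurable_const
  | t + 1 => by
    have ih := (measurable_h m k t).mono (M.past_mono t.le_succ) le_rfl
    have hR (i : Fin 3) : MeasurableSet[M.past (t + 1)] {ω | M.R m k t ω = i} :=
      measurable_R_past t.lt_succ_self (measurableSet_singleton _)
    have hstale (n : Fin 2) : Measurable[M.past (t + 1)]
        (fun ω => min (M.h m k t ω) (M.g n k t ω) + 1) :=
      (measurable_of_countable fun p : ℕ × ℕ => min p.1 p.2 + 1).comp
        (ih.prodMk ((M.measurable_g n k t).mono (M.past_mono t.le_succ) le_rfl))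
    exact .ite (hR 0) ((measurable_of_countable _).comp ih) <| .ite (hR 1)
      (.ite (M.measurableSet_cmd 0 k t) measurable_const (hstale 0))
      (.ite (M.measurableSet_cmd 1 k t) measurable_const (hstale 1))

theorem h_succ_le_add_one (m k : Fin 2) (t : ℕ) (ω : M.Ω) :
    M.h m k (t + 1) ω ≤ M.h m k t ω + 1 := by
  simp only [h]
  split_ifs <;> omega

theorem h_le (m k : Fin 2) : ∀ t ω, M.h m k t ω ≤ t + 1
  | 0, _ => le_rfl
  | t + 1, ω => (M.h_succ_le_add_one m k t ω).trans (Nat.succ_le_succ (h_le m k t ω))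

theorem integrable_h (m k : Fin 2) (t : ℕ) : Integrable (fun ω => (M.h m k t ω : ℝ)) M.μ := by
  have := M.isProb
  refine (integrable_const ((t : ℝ) + 1)).mono'
    ((measurable_of_countable _).comp ((M.measurable_h m k t).mono (M.sigmaOf_le _) le_rfl)
      ).aestronglyMeasurable (ae_of_all _ fun ω => ?_)
  rw [Real.norm_natCast]
  exact_mod_cast M.h_le m k t ω

def freshEvent (m k : Fin 2) (t : ℕ) : Set M.Ω :=
  ⋃ n : Fin 2, M.R m k t ⁻¹' {n.succ} ∩ M.U n k t ⁻¹' Set.Iic M.r2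

theorem measurableSet_freshEvent (m k : Fin 2) (t : ℕ) :
    MeasurableSet[M.present t] (M.freshEvent m k t) :=
  .iUnion fun _ => (measurable_R_present (measurableSet_singleton _)).inter
    (measurable_U_present measurableSet_Iic)

theorem measure_U_le (n k : Fin 2) (t : ℕ) {a : ℝ} (ha : a ≤ 1) :
    M.μ (M.U n k t ⁻¹' Set.Iic a) = ENNReal.ofReal a := by
  rw [← Measure.map_apply (M.U_meas n k t) measurableSet_Iic, M.U_law,
    Measure.restrict_apply measurableSet_Iic, Set.inter_comm, ← Set.Ici_inter_Iic,
    Set.inter_assoc, Set.Iic_inter_Iic, inf_of_le_right ha, Set.Ici_inter_Iic, Real.volume_Icc,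
    sub_zero]

theorem measure_R_eq_succ_inter_U_le (m k n : Fin 2) (t : ℕ) :
    M.μ (M.R m k t ⁻¹' {n.succ} ∩ M.U n k t ⁻¹' Set.Iic M.r2)
      = ENNReal.ofReal (M.bsplit k n * M.r2) := by
  have hRU : IndepFun (M.R m k t) (M.U n k t) M.μ :=
    M.indep.indepFun (i := .inl (m, k, t)) (j := .inr (n, k, t)) (by simp)
  rw [hRU.measure_inter_preimage_eq_mul _ _ (measurableSet_singleton _) measurableSet_Iic,
    M.measure_U_le n k t (M.r2_le_r1.trans M.r1_le_one), ENNReal.ofReal_mul (M.bsplit_nonneg k n)]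
  exact congrArg (· * _) (M.R_law m k t n)

theorem bk_mul_r2_nonneg (k : Fin 2) : 0 ≤ M.bk k * M.r2 :=
  mul_nonneg (add_nonneg (M.bsplit_nonneg k 0) (M.bsplit_nonneg k 1)) M.r2_nonneg

theorem bk_mul_r2_le_one (k : Fin 2) : M.bk k * M.r2 ≤ 1 :=
  mul_le_one₀ (M.bsum_le_one k) M.r2_nonneg (M.r2_le_r1.trans M.r1_le_one)

theorem measureReal_freshEvent (m k : Fin 2) (t : ℕ) :
    M.μ.real (M.freshEvent m k t) = M.bk k * M.r2 := by
  have hdisj : Pairwise (Function.onFun Disjoint fun n : Fin 2 =>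
      M.R m k t ⁻¹' {n.succ} ∩ M.U n k t ⁻¹' Set.Iic M.r2) := fun i j hij =>
    Set.disjoint_left.2 fun _ hi hj => hij (Fin.succ_injective _ (hi.1.symm.trans hj.1))
  rw [measureReal_def, freshEvent, measure_iUnion hdisj fun n =>
      ((M.R_meas m k t) (measurableSet_singleton _)).inter ((M.U_meas n k t) measurableSet_Iic),
    tsum_fintype, Fin.sum_univ_two, M.measure_R_eq_succ_inter_U_le,
    M.measure_R_eq_succ_inter_U_le, ← ENNReal.ofReal_add
      (mul_nonneg (M.bsplit_nonneg k 0) M.r2_nonneg) (mul_nonneg (M.bsplit_nonneg k 1) M.r2_nonneg),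
    ← add_mul]
  exact ENNReal.toReal_ofReal (M.bk_mul_r2_nonneg k)

theorem r2_le_nrate (n k : Fin 2) (t : ℕ) (ω : M.Ω) : M.r2 ≤ M.nrate n k t ω := by
  have := M.r2_le_r1
  unfold nrate nrate1 nrate2
  split_ifs <;> linarith

theorem h_succ_eq_one_of_mem_freshEvent {m k : Fin 2} {t : ℕ} {ω : M.Ω}
    (hω : ω ∈ M.freshEvent m k t) : M.h m k (t + 1) ω = 1 := by
  obtain ⟨n, hR, hU⟩ := Set.mem_iUnion.1 hω
  have hcmd : M.cmd n k t ω := le_trans hU (M.r2_le_nrate n k t ω)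
  simp only [Set.mem_preimage, Set.mem_singleton_iff] at hR
  fin_cases n <;> simp_all [h]

theorem h_succ_le_one_add_indicator (m k : Fin 2) (t : ℕ) (ω : M.Ω) :
    (M.h m k (t + 1) ω : ℝ) ≤
      1 + (M.freshEvent m k t)ᶜ.indicator (fun ω => (M.h m k t ω : ℝ)) ω := by
  by_cases hω : ω ∈ M.freshEvent m k t
  · simp [M.h_succ_eq_one_of_mem_freshEvent hω, hω]
  · rw [Set.indicator_of_mem hω]
    exact_mod_cast (M.h_succ_le_add_one m k t ω).trans_eq (add_comm _ _)

theorem Eh_succ_le (m k : Fin 2) (t : ℕ) :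
    M.Eh m k (t + 1) ≤ 1 + (1 - M.bk k * M.r2) * M.Eh m k t := by
  have := M.isProb
  set B := M.freshEvent m k t
  have hB : MeasurableSet B := M.sigmaOf_le _ _ (M.measurableSet_freshEvent m k t)
  have hindep : Indep (M.present t) (MeasurableSpace.comap (M.h m k t) inferInstance) M.μ :=
    indep_of_indep_of_le_right (M.indep_past_present t).symm (M.measurable_h m k t).comap_le
  have hstale : ∫ ω in Bᶜ, (M.h m k t ω : ℝ) ∂M.μ = (1 - M.bk k * M.r2) * M.Eh m k t := by
    rw [hindep.setIntegral_eq_mul (M.sigmaOf_le _)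
      ((M.measurable_h m k t).mono (M.sigmaOf_le _) le_rfl).aemeasurable
      (M.measurableSet_freshEvent m k t).compl (measurable_of_countable _).aestronglyMeasurable,
      probReal_compl_eq_one_sub hB, M.measureReal_freshEvent]
    rfl
  calc M.Eh m k (t + 1)
      ≤ ∫ ω, 1 + Bᶜ.indicator (fun ω => (M.h m k t ω : ℝ)) ω ∂M.μ :=
        integral_mono (M.integrable_h m k (t + 1))
          ((integrable_const 1).add ((M.integrable_h m k t).indicator hB.compl))
          (M.h_succ_le_one_add_indicator m k t)
    _ = 1 + (1 - M.bk k * M.r2) * M.Eh m k t := by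
        rw [integral_add (integrable_const 1) ((M.integrable_h m k t).indicator hB.compl),
          integral_indicator hB.compl, hstale, integral_const, probReal_univ, one_smul]

theorem Eh_zero (m k : Fin 2) : M.Eh m k 0 = 1 := by
  have := M.isProb
  simp [Eh, h]

theorem Eh_le_geom_sum (m k : Fin 2) (t : ℕ) :
    M.Eh m k t ≤ ∑ j ∈ Finset.range (t + 1), (1 - M.bk k * M.r2) ^ j :=
  le_geom_sum_of_le_one_add_mul (sub_nonneg.2 (M.bk_mul_r2_le_one k)) (M.Eh_zero m k).le
    (M.Eh_succ_le m k) t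

theorem Eh_le_one_div {k : Fin 2} (hb : 0 < M.bk k) (hr2 : 0 < M.r2) (m : Fin 2) (t : ℕ) :
    M.Eh m k t ≤ 1 / (M.bk k * M.r2) := by
  have hpos := mul_pos hb hr2
  calc M.Eh m k t ≤ ∑ j ∈ Finset.range (t + 1), (1 - M.bk k * M.r2) ^ j := M.Eh_le_geom_sum m k t
    _ ≤ (1 - M.bk k * M.r2) ^ 0 / (1 - (1 - M.bk k * M.r2)) := by
      rw [Finset.range_eq_Ico]
      exact geom_sum_Ico_le_of_lt_one (sub_nonneg.2 (M.bk_mul_r2_le_one k)) (by linarith)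
    _ = 1 / (M.bk k * M.r2) := by rw [pow_zero, sub_sub_cancel]

theorem Eh_nonneg (m k : Fin 2) (t : ℕ) : 0 ≤ M.Eh m k t :=
  integral_nonneg fun _ => Nat.cast_nonneg _

end NonObliviousFRAN

/-- Theorem 5, first bound: in the non-oblivious model, if
`b_k > 0` and `r₂ > 0`, then `E[h_{mk}(t)] ≤ ∑_{j=0}^t (1 - b_k r₂)^j` and the
long-run average user AoI is at most `(1/2) ∑_k 1/(b_k r₂)`. -/
theorem stmt16 (M : NonObliviousFRAN) (hb : ∀ k : Fin 2, 0 < M.bk k)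
    (hr2 : 0 < M.r2) :
    (∀ (m k : Fin 2) (t : ℕ),
        M.Eh m k t ≤ ∑ j ∈ Finset.range (t + 1), (1 - M.bk k * M.r2) ^ j) ∧
    limsup
      (fun T : ℕ =>
        (1 / (T : ℝ)) * ∑ t ∈ Finset.Icc 1 T,
          (1 / 4 : ℝ) * ∑ m : Fin 2, ∑ k : Fin 2, M.Eh m k t)
      atTop
    ≤ (1 / 2 : ℝ) * ∑ k : Fin 2, 1 / (M.bk k * M.r2) := by
  refine ⟨M.Eh_le_geom_sum, limsup_cesaro_le (fun t => ?_) (fun t => ?_)⟩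
  · exact mul_nonneg (by norm_num)
      (Finset.sum_nonneg fun m _ => Finset.sum_nonneg fun k _ => M.Eh_nonneg m k t)
  · have hle (m k : Fin 2) := M.Eh_le_one_div (hb k) hr2 m t
    simp only [Fin.sum_univ_two]
    linarith [hle 0 0, hle 0 1, hle 1 0, hle 1 1]
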